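/- Let X be a Banach space, δ ∈ (0,2), and μ,θ ∈ [0,1] with μθ > 1-δ. For every x ∈ X, x* ∈ X* with ‖x‖ = μ, ‖x*‖ = θ and Re x*(x) ≥ 1-δ, one has d_∞((x,x*),Π(X)) ≤ Ψ(μ,θ,δ) when δ < min{1+μ², 1+θ²}, where Ψ(μ,θ,δ) = (2-μ-θ+√((μ-θ)²+8(μθ-1+δ)))/2. -/

import Mathlib

/-!
Rescale `x*` to the unit functional `φ = x*/θ` and apply Phelps' lemma to the ball of radius `μ`,
which contains `x` with `sup φ = μ ≤ φ x + η`, `η = μ - (1 - δ)/θ`. It gives a norm-attaining pair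
`(y, g) ∈ Π(X)` with `‖x - μ y‖ ≤ η/k` and `‖φ - g‖ ≤ 2k`, hence `‖x - y‖ ≤ η/k + 1 - μ` and
`‖x* - g‖ ≤ 2θk + 1 - θ`, and `k` is chosen to make both bounds equal to `Ψ(μ, θ, δ)`.

Phelps' lemma comes from a maximal element `y` of `C` for the Bishop–Phelps order
`v ≽ y ↔ k‖v - y‖ ≤ φ v - φ y` (a Cantor intersection argument), a functional `g` separating `C`
from the open cone `y + {w | k‖w‖ < φ w}`, and the fact that a unit functional which is
nonnegative on that cone lies within `2k` of `φ`.
-/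

/-- The function Ψ(μ,θ,δ) from the paper. -/
noncomputable def Psi (μ θ δ : ℝ) : ℝ :=
  (2 - μ - θ + Real.sqrt ((μ - θ)^2 + 8 * (μ * θ - 1 + δ))) / 2

/-- The set Π(X) of pairs of unit vectors and unit functionals attaining their norm. -/
def PiSet (X : Type*) [NormedAddCommGroup X] [NormedSpace ℝ X] : Set (X × (X →L[ℝ] ℝ)) :=
  {p | ‖p.1‖ = 1 ∧ ‖p.2‖ = 1 ∧ p.2 p.1 = 1}

/-- The d_∞ distance from a pair (x, x*) to Π(X). -/
noncomputable def dInfPi {X : Type*} [NormedAddCommGroup X] [NormedSpace ℝ X]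
    (x : X) (f : X →L[ℝ] ℝ) : ℝ :=
  sInf {r : ℝ | ∃ p ∈ PiSet X, r = max ‖x - p.1‖ ‖f - p.2‖}

open Metric Filter Topology

section BishopPhelpsOrder

variable {E : Type*} [MetricSpace E] {C : Set E} {g : E → ℝ} {k : ℝ}

def bishopPhelpsUpperSet (C : Set E) (g : E → ℝ) (k : ℝ) (w : E) : Set E :=
  {t ∈ C | k * dist t w ≤ g t - g w}

lemma self_mem_bishopPhelpsUpperSet {w : E} (hw : w ∈ C) : w ∈ bishopPhelpsUpperSet C g k w :=
  ⟨hw, by simp⟩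

lemma bishopPhelpsUpperSet_subset (hk : 0 ≤ k) {w t : E} (ht : t ∈ bishopPhelpsUpperSet C g k w) :
    bishopPhelpsUpperSet C g k t ⊆ bishopPhelpsUpperSet C g k w := by
  rintro s ⟨hsC, hs⟩
  refine ⟨hsC, ?_⟩
  nlinarith [ht.2, dist_triangle s t w]

lemma isClosed_bishopPhelpsUpperSet (hC : IsClosed C) (hg : Continuous g) (w : E) :
    IsClosed (bishopPhelpsUpperSet C g k w) :=
  hC.inter (isClosed_le (continuous_const.mul (continuous_id.dist continuous_const))
    (hg.sub continuous_const))

lemma exists_bishopPhelpsUpperSet_subset_closedBall (hk : 0 < k) (hbdd : BddAbove (g '' C))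
    {w : E} (hw : w ∈ C) {r : ℝ} (hr : 0 < r) :
    ∃ t ∈ bishopPhelpsUpperSet C g k w, bishopPhelpsUpperSet C g k t ⊆ closedBall t r := by
  set S := bishopPhelpsUpperSet C g k w
  have hne : (g '' S).Nonempty := ⟨g w, w, self_mem_bishopPhelpsUpperSet hw, rfl⟩
  obtain ⟨_, ⟨t, htS, rfl⟩, ht⟩ :=
    exists_lt_of_lt_csSup hne (sub_lt_self (sSup (g '' S)) (mul_pos hk hr))
  refine ⟨t, htS, fun s hs => ?_⟩
  have hsup : g s ≤ sSup (g '' S) :=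
    le_csSup (hbdd.mono (Set.image_mono fun _ hv => hv.1))
      ⟨s, bishopPhelpsUpperSet_subset hk.le htS hs, rfl⟩
  rw [mem_closedBall]
  exact le_of_mul_le_mul_left (by linarith [hs.2]) hk

theorem IsClosed.exists_maximal_bishopPhelps [CompleteSpace E] (hC : IsClosed C)
    (hg : Continuous g) (hbdd : BddAbove (g '' C)) (hk : 0 < k) {z : E} (hz : z ∈ C) :
    ∃ y ∈ bishopPhelpsUpperSet C g k z, ∀ v ∈ bishopPhelpsUpperSet C g k y, v = y := by
  choose! next hnext hnext_ball using fun (n : ℕ) (w : E) (hw : w ∈ C) =>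
    exists_bishopPhelpsUpperSet_subset_closedBall hk hbdd hw (Nat.one_div_pos_of_nat (n := n))
  let u : ℕ → E := fun n => Nat.rec z next n
  have hu : ∀ n, u n ∈ C := fun n => by
    induction n with
    | zero => exact hz
    | succ n ih => exact (hnext n (u n) ih).1
  let s : ℕ → Set E := fun n => bishopPhelpsUpperSet C g k (u (n + 1))
  have hs_anti : Antitone s := antitone_nat_of_succ_le fun n =>
    bishopPhelpsUpperSet_subset hk.le (hnext _ _ (hu (n + 1)))
  have hs_bdd : ∀ n, Bornology.IsBounded (s n) := fun n =>
    isBounded_closedBall.subset (hnext_ball n (u n) (hu n))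
  have hs_diam : ∀ n, diam (s n) ≤ 2 * (1 / ((n : ℝ) + 1)) := fun n =>
    diam_le_of_subset_closedBall (by positivity) (hnext_ball n (u n) (hu n))
  have hs_diam_lim : Tendsto (fun n => diam (s n)) atTop (𝓝 0) :=
    squeeze_zero (fun n => diam_nonneg) hs_diam
      (by simpa using (tendsto_one_div_add_atTop_nhds_zero_nat (𝕜 := ℝ)).const_mul 2)
  obtain ⟨y, hy⟩ := nonempty_iInter_of_nonempty_biInter
    (fun n => isClosed_bishopPhelpsUpperSet hC hg _) hs_bdd
    (fun N => ⟨u (N + 1), Set.mem_iInter₂.2 fun n hn =>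
      hs_anti hn (self_mem_bishopPhelpsUpperSet (hu (N + 1)))⟩) hs_diam_lim
  rw [Set.mem_iInter] at hy
  refine ⟨y, bishopPhelpsUpperSet_subset hk.le (hnext 0 z hz) (hy 0), fun v hv => ?_⟩
  have hv_mem : ∀ n, v ∈ s n := fun n => bishopPhelpsUpperSet_subset hk.le (hy n) hv
  exact dist_le_zero.1 (ge_of_tendsto' hs_diam_lim fun n =>
    dist_le_diam_of_mem (hs_bdd n) (hv_mem n) (hy n))

end BishopPhelpsOrder

section Phelps

variable {X : Type*} [NormedAddCommGroup X] [NormedSpace ℝ X] {φ g : X →L[ℝ] ℝ} {k : ℝ}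

def bishopPhelpsCone (φ : X →L[ℝ] ℝ) (k : ℝ) : Set X := {w | k * ‖w‖ < φ w}

lemma isOpen_bishopPhelpsCone : IsOpen (bishopPhelpsCone φ k) :=
  isOpen_lt (continuous_const.mul continuous_norm) φ.continuous

lemma convex_bishopPhelpsCone (hk : 0 ≤ k) : Convex ℝ (bishopPhelpsCone φ k) := by
  simpa [bishopPhelpsCone, sub_neg] using ((convexOn_norm convex_univ).smul hk |>.sub
    (φ.toLinearMap.concaveOn convex_univ)).convex_lt 0

lemma smul_mem_bishopPhelpsCone {w : X} (hw : w ∈ bishopPhelpsCone φ k) {t : ℝ} (ht : 0 < t) :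
    t • w ∈ bishopPhelpsCone φ k := by
  change k * ‖t • w‖ < φ (t • w)
  rw [norm_smul, Real.norm_of_nonneg ht.le, map_smul, smul_eq_mul, mul_left_comm]
  exact mul_lt_mul_of_pos_left hw ht

lemma zero_notMem_bishopPhelpsCone : (0 : X) ∉ bishopPhelpsCone φ k := by
  simp [bishopPhelpsCone]

lemma nonempty_bishopPhelpsCone (hk0 : 0 ≤ k) (hk : k < ‖φ‖) :
    (bishopPhelpsCone φ k).Nonempty := by
  obtain ⟨x, hx1, hx⟩ := φ.exists_lt_apply_of_lt_opNorm hk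
  have hkx : k * ‖x‖ ≤ k := mul_le_of_le_one_right hk0 hx1.le
  rcases lt_abs.1 hx with hx' | hx'
  · exact ⟨x, by change k * ‖x‖ < φ x; linarith⟩
  · exact ⟨-x, by change k * ‖-x‖ < φ (-x); rw [norm_neg, map_neg]; linarith⟩

lemma apply_le_of_nonneg_on_bishopPhelpsCone (hg : g ≠ 0)
    (hcone : ∀ w ∈ bishopPhelpsCone φ k, 0 ≤ g w) {w : X} (hw : g w = 0) : φ w ≤ k * ‖w‖ := by
  by_contra! hlt
  have hmin : IsLocalMin g w := by
    filter_upwards [isOpen_bishopPhelpsCone.mem_nhds hlt] with v hv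
    rw [hw]
    exact hcone v hv
  exact hg (hmin.hasFDerivAt_eq_zero g.hasFDerivAt)

lemma exists_eq_smul_add_of_abs_apply_le_on_ker (hk : 0 ≤ k)
    (hker : ∀ w, g w = 0 → |φ w| ≤ k * ‖w‖) :
    ∃ (c : ℝ) (h : X →L[ℝ] ℝ), ‖h‖ ≤ k ∧ φ = c • g + h := by
  let p := LinearMap.ker (g : X →ₗ[ℝ] ℝ)
  obtain ⟨h, hext, hnorm⟩ := exists_extension_norm_eq p (φ.comp p.subtypeL)
  have hh : ‖h‖ ≤ k := hnorm ▸ (φ.comp p.subtypeL).opNorm_le_bound hk fun w => hker w w.2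
  have hsub : ⨅ _ : Unit, LinearMap.ker (g : X →ₗ[ℝ] ℝ) ≤
      LinearMap.ker ((φ - h : X →L[ℝ] ℝ) : X →ₗ[ℝ] ℝ) := by
    intro w hw
    have hw' : w ∈ p := by simpa [p] using hw
    simpa [sub_eq_zero] using (hext ⟨w, hw'⟩).symm
  obtain ⟨c, hc⟩ := Submodule.mem_span_singleton.1 (by simpa using mem_span_of_iInf_ker_le_ker hsub)
  refine ⟨c, h, hh, ?_⟩
  ext w
  have := LinearMap.congr_fun hc w
  simp only [LinearMap.smul_apply, ContinuousLinearMap.coe_coe, smul_eq_mul,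
    LinearMap.sub_apply] at this
  simp only [add_apply, smul_apply, smul_eq_mul]
  linarith

theorem norm_sub_le_of_nonneg_on_bishopPhelpsCone (hφ : ‖φ‖ = 1) (hg : ‖g‖ = 1) (hk0 : 0 ≤ k)
    (hk1 : k < 1) (hcone : ∀ w ∈ bishopPhelpsCone φ k, 0 ≤ g w) : ‖φ - g‖ ≤ 2 * k := by
  have hg0 : g ≠ 0 := norm_ne_zero_iff.1 (hg ▸ one_ne_zero)
  have hker : ∀ w, g w = 0 → |φ w| ≤ k * ‖w‖ := by
    intro w hw
    have hneg := apply_le_of_nonneg_on_bishopPhelpsCone hg0 hcone (w := -w) (by simp [hw])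
    rw [map_neg, norm_neg] at hneg
    exact abs_le.2 ⟨by linarith, apply_le_of_nonneg_on_bishopPhelpsCone hg0 hcone hw⟩
  obtain ⟨c, h, hh, rfl⟩ := exists_eq_smul_add_of_abs_apply_le_on_ker hk0 hker
  obtain ⟨v, hv⟩ := nonempty_bishopPhelpsCone hk0 (hφ ▸ hk1)
  have hc : 0 < c := by
    have hhv : h v ≤ k * ‖v‖ :=
      (le_abs_self _).trans ((h.le_opNorm v).trans (by gcongr))
    have hv' : k * ‖v‖ < c * g v + h v := hv
    exact pos_of_mul_pos_left (by linarith) (hcone v hv)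
  have hc1 : |c - 1| ≤ k := by
    have := abs_norm_sub_norm_le (c • g + h) (c • g)
    rw [hφ, norm_smul, hg, mul_one, Real.norm_of_nonneg hc.le, add_sub_cancel_left] at this
    rw [abs_sub_comm]
    exact this.trans hh
  calc ‖c • g + h - g‖ = ‖(c - 1) • g + h‖ := by congr 1; module
    _ ≤ |c - 1| + k := by
      grw [norm_add_le, norm_smul, hg, mul_one, Real.norm_eq_abs, hh]
    _ ≤ 2 * k := by linarith

lemma exists_pos_on_bishopPhelpsCone_isMaxOn {C : Set X} (hC : Convex ℝ C) (hk0 : 0 ≤ k)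
    (hk : k < ‖φ‖) {y : X} (hy : y ∈ C) (hmax : ∀ v ∈ C, k * ‖v - y‖ ≤ φ v - φ y → v = y) :
    ∃ g : X →L[ℝ] ℝ, ‖g‖ = 1 ∧ (∀ w ∈ bishopPhelpsCone φ k, 0 < g w) ∧ IsMaxOn g C y := by
  have hdisj : Disjoint (bishopPhelpsCone φ k) ((fun w => y + w) ⁻¹' C) := by
    refine Set.disjoint_left.2 fun w hw hwC => zero_notMem_bishopPhelpsCone (φ := φ) (k := k) ?_
    have : y + w = y := hmax _ hwC (by simpa using hw.le)
    rwa [add_eq_left.1 this] at hw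
  obtain ⟨f, u, hfU, hfC⟩ := geometric_hahn_banach_open (convex_bishopPhelpsCone hk0)
    isOpen_bishopPhelpsCone (hC.translate_preimage_right y) hdisj
  obtain ⟨v, hv⟩ := nonempty_bishopPhelpsCone hk0 hk
  have hu0 : u ≤ 0 := by simpa using hfC 0 (by simpa using hy)
  -- The cone contains `t • v` for every `t > 0`, so `u` cannot be negative.
  have hu : u = 0 := by
    refine hu0.antisymm (not_lt.1 fun hu => ?_)
    have hfv : f v < 0 := (hfU v hv).trans_le hu0
    have := hfU _ (smul_mem_bishopPhelpsCone hv (div_pos_of_neg_of_neg hu hfv))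
    rw [map_smul, smul_eq_mul, div_mul_cancel₀ _ hfv.ne] at this
    exact lt_irrefl _ this
  subst hu
  have hf : 0 < ‖f‖ := norm_pos_iff.2 fun hf => by simpa [hf] using hfU v hv
  refine ⟨-‖f‖⁻¹ • f, ?_, fun w hw => ?_, isMaxOn_iff.2 fun c hc => ?_⟩
  · rw [norm_smul, norm_neg, norm_inv, norm_norm, inv_mul_cancel₀ hf.ne']
  · simpa using mul_pos (inv_pos.2 hf) (neg_pos.2 (hfU w hw))
  · have := hfC (c - y) (by simpa using hc)
    rw [map_sub, sub_nonneg] at this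
    simpa using mul_le_mul_of_nonneg_left this (inv_nonneg.2 hf.le)

theorem phelps_lemma [CompleteSpace X] {C : Set X} (hC : IsClosed C) (hCc : Convex ℝ C)
    (hφ : ‖φ‖ = 1) (hbdd : BddAbove (φ '' C)) (hk0 : 0 < k) (hk1 : k < 1) {z : X} (hz : z ∈ C) :
    ∃ y ∈ C, ∃ g : X →L[ℝ] ℝ, ‖g‖ = 1 ∧ IsMaxOn g C y ∧ k * ‖y - z‖ ≤ φ y - φ z ∧
      ‖φ - g‖ ≤ 2 * k := by
  obtain ⟨y, ⟨hyC, hyz⟩, hmax⟩ := hC.exists_maximal_bishopPhelps φ.continuous hbdd hk0 hz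
  obtain ⟨g, hg, hpos, hgmax⟩ := exists_pos_on_bishopPhelpsCone_isMaxOn hCc hk0.le (hφ ▸ hk1)
    hyC fun v hvC hv => hmax v ⟨hvC, by rwa [dist_eq_norm]⟩
  refine ⟨y, hyC, g, hg, hgmax, by rwa [← dist_eq_norm], ?_⟩
  exact norm_sub_le_of_nonneg_on_bishopPhelpsCone hφ hg hk0.le hk1 fun w hw => (hpos w hw).le

lemma mul_norm_le_of_isMaxOn_closedBall {r : ℝ} (hr : 0 < r) {y : X}
    (hy : IsMaxOn g (closedBall 0 r) y) : r * ‖g‖ ≤ g y := by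
  rw [← le_div_iff₀' hr]
  refine le_of_forall_lt fun s hs => ?_
  obtain ⟨x, hx1, hx⟩ := g.exists_lt_apply_of_lt_opNorm hs
  have hmem : ∀ c : ℝ, |c| ≤ r → c • x ∈ closedBall (0 : X) r := fun c hc => by
    rw [mem_closedBall_zero_iff, norm_smul, Real.norm_eq_abs]
    nlinarith [abs_nonneg c, norm_nonneg x]
  have h1 := isMaxOn_iff.1 hy _ (hmem r (abs_of_pos hr).le)
  have h2 := isMaxOn_iff.1 hy _ (hmem (-r) (by rw [abs_neg, abs_of_pos hr]))
  rw [map_smul, smul_eq_mul] at h1 h2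
  rw [lt_div_iff₀' hr]
  rw [Real.norm_eq_abs, lt_abs] at hx
  rcases hx with hx | hx <;> nlinarith

lemma exists_mem_piSet_norm_sub_le [CompleteSpace X] (hφ : ‖φ‖ = 1) (hk0 : 0 < k) (hk1 : k < 1)
    {μ : ℝ} (hμ : 0 < μ) {x : X} (hx : ‖x‖ ≤ μ) :
    ∃ p ∈ PiSet X, k * ‖x - μ • p.1‖ ≤ μ - φ x ∧ ‖φ - p.2‖ ≤ 2 * k := by
  have hφle : ∀ v, φ v ≤ ‖v‖ := fun v => by
    simpa [hφ] using (le_abs_self _).trans (φ.le_opNorm v)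
  obtain ⟨y, hyC, g, hg, hgmax, hyx, hφg⟩ := phelps_lemma isClosed_closedBall
    (convex_closedBall 0 μ) hφ ⟨μ, fun _ ⟨v, hv, hφv⟩ => hφv ▸ (hφle v).trans
      (mem_closedBall_zero_iff.1 hv)⟩ hk0 hk1 (mem_closedBall_zero_iff.2 hx)
  have hy : ‖y‖ ≤ μ := mem_closedBall_zero_iff.1 hyC
  have hgy : μ ≤ g y := by simpa [hg] using mul_norm_le_of_isMaxOn_closedBall hμ hgmax
  have hgy' : g y ≤ ‖y‖ := by simpa [hg] using (le_abs_self _).trans (g.le_opNorm y)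
  refine ⟨(μ⁻¹ • y, g), ⟨?_, hg, ?_⟩, ?_, hφg⟩
  · rw [norm_smul, norm_inv, Real.norm_of_nonneg hμ.le, le_antisymm hy (hgy.trans hgy'),
      inv_mul_cancel₀ hμ.ne']
  · rw [map_smul, smul_eq_mul, le_antisymm (hgy'.trans hy) hgy, inv_mul_cancel₀ hμ.ne']
  · rw [smul_inv_smul₀ hμ.ne', norm_sub_rev]
    linarith [hφle y]

lemma dInfPi_le_of_mem {x : X} {f : X →L[ℝ] ℝ} {p : X × (X →L[ℝ] ℝ)} (hp : p ∈ PiSet X) :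
    dInfPi x f ≤ max ‖x - p.1‖ ‖f - p.2‖ :=
  csInf_le ⟨0, by rintro r ⟨q, -, rfl⟩; positivity⟩ ⟨p, hp, rfl⟩

end Phelps

lemma norm_sub_le_norm_sub_smul_add {E : Type*} [SeminormedAddCommGroup E] [NormedSpace ℝ E]
    {u : E} (hu : ‖u‖ = 1) (v : E) {c : ℝ} (hc : c ≤ 1) : ‖v - u‖ ≤ ‖v - c • u‖ + (1 - c) := by
  have : ‖c • u - u‖ = 1 - c := by
    rw [show c • u - u = (c - 1) • u by module, norm_smul, hu, mul_one,
      Real.norm_of_nonpos (by linarith), neg_sub]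
  linarith [norm_sub_le_norm_sub_add_norm_sub v (c • u) u]

/-- `k` is the positive root of `2θ²k² + θ(μ - θ)k = μθ - 1 + δ`, the value at which the two
estimates `(μ - (1 - δ)/θ)/k + (1 - μ)` and `2θk + (1 - θ)` coming from Phelps' lemma agree. -/
lemma exists_parameter_eq_Psi {μ θ δ : ℝ} (hθ : 0 < θ) (h : μ * θ > 1 - δ)
    (hδ : δ < 1 + θ ^ 2) :
    ∃ k, 0 < k ∧ k < 1 ∧ (μ - (1 - δ) / θ) / k + (1 - μ) = Psi μ θ δ ∧
      θ * (2 * k) + (1 - θ) = Psi μ θ δ := by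
  set s := √((μ - θ) ^ 2 + 8 * (μ * θ - 1 + δ))
  have hPsi : Psi μ θ δ = (2 - μ - θ + s) / 2 := rfl
  have hs_sq : s ^ 2 = (μ - θ) ^ 2 + 8 * (μ * θ - 1 + δ) := Real.sq_sqrt (by nlinarith)
  have hs_gt : |μ - θ| < s := by
    rw [← Real.sqrt_sq_eq_abs]; exact Real.sqrt_lt_sqrt (sq_nonneg _) (by nlinarith)
  have hs_lt : s < μ + 3 * θ := by nlinarith [abs_lt.1 hs_gt]
  have hk0 : 0 < θ - μ + s := by linarith [le_abs_self (μ - θ)]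
  refine ⟨(θ - μ + s) / (4 * θ), by positivity, by rw [div_lt_one (by positivity)]; linarith,
    ?_, ?_⟩ <;> rw [hPsi] <;> field_simp
  · nlinarith
  · ring

theorem dInfPi_le_Psi_general (X : Type*) [NormedAddCommGroup X] [NormedSpace ℝ X]
    [CompleteSpace X] (δ μ θ : ℝ)
    (hμ : μ ∈ Set.Icc (0:ℝ) 1) (hθ : θ ∈ Set.Icc (0:ℝ) 1) (h : μ * θ > 1 - δ)
    (hsmall : δ < min (1 + μ^2) (1 + θ^2))
    (x : X) (f : X →L[ℝ] ℝ) (hx : ‖x‖ = μ) (hf : ‖f‖ = θ) (hfx : f x ≥ 1 - δ) :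
    dInfPi x f ≤ Psi μ θ δ := by
  obtain ⟨hμ0, hμ1⟩ := hμ
  obtain ⟨hθ0, hθ1⟩ := hθ
  obtain ⟨hsμ, hsθ⟩ := lt_min_iff.1 hsmall
  have hμpos : 0 < μ := hμ0.lt_of_ne fun h0 => by subst h0; nlinarith
  have hθpos : 0 < θ := hθ0.lt_of_ne fun h0 => by subst h0; nlinarith
  obtain ⟨k, hk0, hk1, hkx, hkf⟩ := exists_parameter_eq_Psi hθpos h hsθ
  have hφ : ‖θ⁻¹ • f‖ = 1 := by
    rw [norm_smul, hf, norm_inv, Real.norm_of_nonneg hθ0, inv_mul_cancel₀ hθpos.ne']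
  obtain ⟨p, hp, hpx, hpf⟩ := exists_mem_piSet_norm_sub_le hφ hk0 hk1 hμpos hx.le
  have hφx : (1 - δ) / θ ≤ (θ⁻¹ • f) x := by
    rw [smul_apply, smul_eq_mul, div_eq_inv_mul]; gcongr
  refine (dInfPi_le_of_mem hp).trans (max_le ?_ ?_)
  · calc ‖x - p.1‖ ≤ ‖x - μ • p.1‖ + (1 - μ) := norm_sub_le_norm_sub_smul_add hp.1 x hμ1
      _ ≤ (μ - (1 - δ) / θ) / k + (1 - μ) := by
        gcongr; rw [le_div_iff₀' hk0]; linarith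
      _ = Psi μ θ δ := hkx
  · calc ‖f - p.2‖ ≤ ‖f - θ • p.2‖ + (1 - θ) := norm_sub_le_norm_sub_smul_add hp.2.1 f hθ1
      _ = θ * ‖θ⁻¹ • f - p.2‖ + (1 - θ) := by
        rw [← norm_smul_of_nonneg hθ0, smul_sub, smul_inv_smul₀ hθpos.ne']
      _ ≤ θ * (2 * k) + (1 - θ) := by gcongr
      _ = Psi μ θ δ := hkf

theorem dInfPi_le_Psi (X : Type*) [NormedAddCommGroup X] [NormedSpace ℝ X]
    [CompleteSpace X] (δ μ θ : ℝ) (hδ : δ ∈ Set.Ioo (0:ℝ) 2)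
    (hμ : μ ∈ Set.Icc (0:ℝ) 1) (hθ : θ ∈ Set.Icc (0:ℝ) 1) (h : μ * θ > 1 - δ)
    (hsmall : δ < min (1 + μ^2) (1 + θ^2))
    (x : X) (f : X →L[ℝ] ℝ) (hx : ‖x‖ = μ) (hf : ‖f‖ = θ) (hfx : f x ≥ 1 - δ) :
    dInfPi x f ≤ Psi μ θ δ :=
  dInfPi_le_Psi_general X δ μ θ hμ hθ h hsmall x f hx hf hfx
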